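/- Let M be a compact Hausdorff space with basepoint x₀, fix 0 < ε < 1/6, and let σ : [0,ε] → M be a stick. Set X := r([0,1] × Ω^σM) with the subspace topology inherited from ΩM, set A := r(([0,ε] ∪ [1−ε,1]) × Ω^σM), and set B := (𝓕ᶜ ∪ ℋ) ∩ X, where 𝓕ᶜ denotes the complement of 𝓕 in ΩM. Then the closure of A in X is contained in the interior of B in X (this is the hypothesis needed to apply excision in the construction of the avoiding-stick coproduct). -/
import Mathlib


open Set

/-- The based loop space of `M` at `x₀`: continuous maps `[0,1] → M` sending both
endpoints to `x₀`, with the compact-open topology. -/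
abbrev OmegaLoop (M : Type*) [TopologicalSpace M] (x₀ : M) : Type _ :=
  {γ : C(unitInterval, M) // γ 0 = x₀ ∧ γ 1 = x₀}

/-- The subspace `Ω^σ M` of loops following the stick `σ` on `[0,ε]` and its reverse on
`[1-ε,1]`. -/
abbrev StickOmegaLoop (M : Type*) [TopologicalSpace M] (x₀ : M) (ε : ℝ) (σ : ℝ → M) :
    Type _ :=
  {γ : OmegaLoop M x₀ // ∀ t : unitInterval,
    ((t : ℝ) ≤ ε → γ.1 t = σ t) ∧ (1 - ε ≤ (t : ℝ) → γ.1 t = σ (1 - (t : ℝ)))}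

/-- The midpoint `1/2` of the unit interval. -/
noncomputable def half : unitInterval := ⟨1/2, by norm_num⟩

/-- The figure-eight set `𝓕 = {γ ∈ ΩM : γ(1/2) = x₀}`. -/
def FigureEightSet (M : Type*) [TopologicalSpace M] (x₀ : M) : Set (OmegaLoop M x₀) :=
  {γ | γ.1 half = x₀}

/-- The set `ℋ` of half-constant loops: loops constant at `x₀` on `[0,1/2]` or on
`[1/2,1]`. -/
def HalfConstant (M : Type*) [TopologicalSpace M] (x₀ : M) : Set (OmegaLoop M x₀) :=
  {γ | (∀ t : unitInterval, (t : ℝ) ≤ 1/2 → γ.1 t = x₀) ∨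
    (∀ t : unitInterval, 1/2 ≤ (t : ℝ) → γ.1 t = x₀)}

/-- The restriction of the reparametrization map `r` to `[0,1] × Ω^σM`. -/
def restrictedRep {M : Type*} [TopologicalSpace M] (x₀ : M) (ε : ℝ) (σ : ℝ → M)
    (r : C(unitInterval × OmegaLoop M x₀, OmegaLoop M x₀)) :
    unitInterval × StickOmegaLoop M x₀ ε σ → OmegaLoop M x₀ :=
  fun p => r (p.1, p.2.1)

/-- Let `M` be compact Hausdorff with basepoint `x₀`, `0 < ε < 1/6`, `σ`
a stick.  With `X := r([0,1] × Ω^σM)` (subspace topology from `ΩM`),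
`A := r(([0,ε] ∪ [1-ε,1]) × Ω^σM)` and `B := (𝓕ᶜ ∪ ℋ) ∩ X`, the closure of `A` in `X` is
contained in the interior of `B` in `X`. -/
theorem closure_subset_interior_excision_hypothesis
    {M : Type*} [TopologicalSpace M] [CompactSpace M] [T2Space M]
    (x₀ : M) (ε : ℝ) (hε0 : 0 < ε) (hε : ε < 1/6)
    (σ : ℝ → M) (hσcont : ContinuousOn σ (Icc 0 ε)) (hσinj : InjOn σ (Icc 0 ε))
    (hσ0 : σ 0 = x₀)
    (r : C(unitInterval × OmegaLoop M x₀, OmegaLoop M x₀))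
    (hr : ∀ (s : unitInterval) (γ : OmegaLoop M x₀) (t : unitInterval),
      ((t : ℝ) ≤ 1/2 →
        (r (s, γ)).1 t = γ.1 (projIcc 0 1 zero_le_one (2 * (s : ℝ) * (t : ℝ)))) ∧
      (1/2 ≤ (t : ℝ) →
        (r (s, γ)).1 t =
          γ.1 (projIcc 0 1 zero_le_one (2 * (1 - (s : ℝ)) * (t : ℝ) - 1 + 2 * (s : ℝ))))) :
    closure {x : Set.range (restrictedRep x₀ ε σ r) |
        (x : OmegaLoop M x₀) ∈
          restrictedRep x₀ ε σ r '' {p | (p.1 : ℝ) ≤ ε ∨ 1 - ε ≤ (p.1 : ℝ)}} ⊆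
      interior {x : Set.range (restrictedRep x₀ ε σ r) |
        (x : OmegaLoop M x₀) ∈ (FigureEightSet M x₀)ᶜ ∪ HalfConstant M x₀} := by
  classical
  have hε1 : ε < 1 := by linarith
  have hεI : (ε : ℝ) ∈ Icc (0:ℝ) 1 := ⟨le_of_lt hε0, by linarith⟩
  have hhalf : ((half : unitInterval) : ℝ) = 1/2 := rfl
  set f := restrictedRep x₀ ε σ r with hf
  -- evaluation is continuous on the range subtype
  have hev : ∀ t : unitInterval,
      Continuous fun y : Set.range f => ((y : OmegaLoop M x₀).1 : C(unitInterval, M)) t := by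
    intro t
    exact (continuous_eval_const t).comp (continuous_subtype_val.comp continuous_subtype_val)
  -- value formulas
  have hmem1 : ∀ (s t : unitInterval), (t:ℝ) ≤ 1/2 → 2*(s:ℝ)*(t:ℝ) ∈ Icc (0:ℝ) 1 := by
    intro s t ht
    refine ⟨mul_nonneg (mul_nonneg (by norm_num) s.2.1) t.2.1, ?_⟩
    nlinarith [s.2.1, s.2.2, t.2.1]
  have hval1 : ∀ (s : unitInterval) (γ : OmegaLoop M x₀) (t : unitInterval)
      (ht : (t:ℝ) ≤ 1/2),
      (r (s, γ)).1 t = γ.1 ⟨2*(s:ℝ)*(t:ℝ), hmem1 s t ht⟩ := by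
    intro s γ t ht
    rw [(hr s γ t).1 ht, Set.projIcc_of_mem]
  have hmem2 : ∀ (s t : unitInterval), 1/2 ≤ (t:ℝ) →
      2*(1-(s:ℝ))*(t:ℝ) - 1 + 2*(s:ℝ) ∈ Icc (0:ℝ) 1 := by
    intro s t ht
    constructor
    · nlinarith [s.2.1, s.2.2, mul_nonneg (by linarith [s.2.2] : (0:ℝ) ≤ 1 - s)
        (by linarith : (0:ℝ) ≤ 2*(t:ℝ) - 1)]
    · nlinarith [mul_nonneg (by linarith [s.2.2] : (0:ℝ) ≤ 1 - s)
        (by linarith [t.2.2] : (0:ℝ) ≤ 1 - (t:ℝ))]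
  have hval2 : ∀ (s : unitInterval) (γ : OmegaLoop M x₀) (t : unitInterval)
      (ht : 1/2 ≤ (t:ℝ)),
      (r (s, γ)).1 t = γ.1 ⟨2*(1-(s:ℝ))*(t:ℝ) - 1 + 2*(s:ℝ), hmem2 s t ht⟩ := by
    intro s γ t ht
    rw [(hr s γ t).2 ht, Set.projIcc_of_mem]
  have happ : ∀ (γ : OmegaLoop M x₀) (a b : unitInterval), (a:ℝ) = (b:ℝ) → γ.1 a = γ.1 b := by
    intro γ a b h
    rw [Subtype.ext h]
  -- key fact: if y = r(s,γ) with ε ≤ s, then y hits σ ε on the first half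
  have hhit1 : ∀ (s : unitInterval) (γ : StickOmegaLoop M x₀ ε σ), ε ≤ (s:ℝ) →
      ∃ t : unitInterval, (t:ℝ) ≤ 1/2 ∧ (r (s, γ.1)).1 t = σ ε := by
    intro s γ hs
    have hs0 : (0:ℝ) < s := lt_of_lt_of_le hε0 hs
    have htI : ε/(2*(s:ℝ)) ∈ Icc (0:ℝ) 1 := by
      constructor
      · exact div_nonneg (le_of_lt hε0) (by linarith)
      · rw [div_le_one (by linarith)]; linarith [s.2.2]
    refine ⟨⟨ε/(2*(s:ℝ)), htI⟩, ?_, ?_⟩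
    · show ε/(2*(s:ℝ)) ≤ 1/2
      rw [div_le_div_iff₀ (by linarith) (by norm_num)]; linarith
    · have ht2 : (((⟨ε/(2*(s:ℝ)), htI⟩ : unitInterval)):ℝ) ≤ 1/2 := by
        show ε/(2*(s:ℝ)) ≤ 1/2
        rw [div_le_div_iff₀ (by linarith) (by norm_num)]; linarith
      rw [hval1 s γ.1 _ ht2]
      have he : γ.1.1 ⟨2*(s:ℝ)*(ε/(2*(s:ℝ))), hmem1 _ _ ht2⟩ = γ.1.1 ⟨ε, hεI⟩ :=
        happ γ.1 _ _ (by field_simp)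
      rw [he, (γ.2 ⟨ε, hεI⟩).1 le_rfl]
  -- key fact: if y = r(s,γ) with s ≤ 1-ε, then y hits σ ε on the second half
  have hhit2 : ∀ (s : unitInterval) (γ : StickOmegaLoop M x₀ ε σ), (s:ℝ) ≤ 1 - ε →
      ∃ t : unitInterval, 1/2 ≤ (t:ℝ) ∧ (r (s, γ.1)).1 t = σ ε := by
    intro s γ hs
    have hs1 : (0:ℝ) < 1 - s := by linarith
    have htI : 1 - ε/(2*(1-(s:ℝ))) ∈ Icc (0:ℝ) 1 := by
      constructor
      · have : ε/(2*(1-(s:ℝ))) ≤ 1/2 := by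
          rw [div_le_div_iff₀ (by linarith) (by norm_num)]; linarith
        linarith
      · have : 0 ≤ ε/(2*(1-(s:ℝ))) := by positivity
        linarith
    have ht2 : 1/2 ≤ (((⟨1 - ε/(2*(1-(s:ℝ))), htI⟩ : unitInterval)):ℝ) := by
      show 1/2 ≤ 1 - ε/(2*(1-(s:ℝ)))
      have : ε/(2*(1-(s:ℝ))) ≤ 1/2 := by
        rw [div_le_div_iff₀ (by linarith) (by norm_num)]; linarith
      linarith
    refine ⟨⟨1 - ε/(2*(1-(s:ℝ))), htI⟩, ht2, ?_⟩
    rw [hval2 s γ.1 _ ht2]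
    have h1εI : (1 - ε : ℝ) ∈ Icc (0:ℝ) 1 := ⟨by linarith, by linarith⟩
    have he : γ.1.1 ⟨2*(1-(s:ℝ))*(1 - ε/(2*(1-(s:ℝ)))) - 1 + 2*(s:ℝ), hmem2 _ _ ht2⟩
        = γ.1.1 ⟨1 - ε, h1εI⟩ := by
      refine happ γ.1 _ _ ?_
      show 2*(1-(s:ℝ))*(1 - ε/(2*(1-(s:ℝ)))) - 1 + 2*(s:ℝ) = 1 - ε
      field_simp
      ring
    rw [he, (γ.2 ⟨1 - ε, h1εI⟩).2 (by norm_num)]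
    norm_num
  -- the value at 1/2 of r(s,γ) is γ(s)
  have hvalhalf : ∀ (s : unitInterval) (γ : OmegaLoop M x₀),
      (r (s, γ)).1 half = γ.1 s := by
    intro s γ
    rw [hval1 s γ half (by rw [hhalf])]
    refine happ γ _ _ ?_
    show 2*(s:ℝ)*((half:unitInterval):ℝ) = (s:ℝ)
    rw [hhalf]; ring
  -- if s < ε then r(s,γ.1) ∈ B for stick loops γ
  have hBlow : ∀ (s : unitInterval) (γ : StickOmegaLoop M x₀ ε σ), (s:ℝ) ≤ ε →
      r (s, γ.1) ∈ (FigureEightSet M x₀)ᶜ ∪ HalfConstant M x₀ := by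
    intro s γ hs
    rcases eq_or_lt_of_le s.2.1 with h0 | h0
    · -- s = 0 : half-constant on the left
      right; left
      intro t ht
      rw [hval1 s γ.1 t ht]
      have he : γ.1.1 ⟨2*(s:ℝ)*(t:ℝ), hmem1 s t ht⟩ = γ.1.1 0 := by
        refine happ γ.1 _ _ ?_
        show 2*(s:ℝ)*(t:ℝ) = ((0:unitInterval):ℝ)
        rw [← h0, Set.Icc.coe_zero]; ring
      rw [he, γ.1.2.1]
    · -- 0 < s ≤ ε : the value at 1/2 is σ s ≠ x₀
      left
      intro hFE
      have hha := hvalhalf s γ.1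
      rw [(γ.2 s).1 hs] at hha
      have hFE' : (r (s, γ.1)).1 half = x₀ := hFE
      have hx0 : σ (s:ℝ) = σ 0 := by
        rw [hσ0]
        exact hha.symm.trans hFE'
      have : (s:ℝ) = 0 := hσinj ⟨le_of_lt h0, hs⟩ ⟨le_rfl, le_of_lt hε0⟩ hx0
      linarith
  -- if 1-ε ≤ s then r(s,γ.1) ∈ B
  have hBhigh : ∀ (s : unitInterval) (γ : StickOmegaLoop M x₀ ε σ), 1 - ε ≤ (s:ℝ) →
      r (s, γ.1) ∈ (FigureEightSet M x₀)ᶜ ∪ HalfConstant M x₀ := by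
    intro s γ hs
    rcases eq_or_lt_of_le s.2.2 with h1 | h1
    · -- s = 1 : half-constant on the right
      right; right
      intro t ht
      rw [hval2 s γ.1 t ht]
      have he : γ.1.1 ⟨2*(1-(s:ℝ))*(t:ℝ) - 1 + 2*(s:ℝ), hmem2 s t ht⟩ = γ.1.1 1 := by
        refine happ γ.1 _ _ ?_
        show 2*(1-(s:ℝ))*(t:ℝ) - 1 + 2*(s:ℝ) = ((1:unitInterval):ℝ)
        rw [h1, Set.Icc.coe_one]; ring
      rw [he, γ.1.2.2]
    · -- 1-ε ≤ s < 1 : the value at 1/2 is σ (1-s) ≠ x₀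
      left
      intro hFE
      have hha := hvalhalf s γ.1
      rw [(γ.2 s).2 hs] at hha
      have hFE' : (r (s, γ.1)).1 half = x₀ := hFE
      have hx0 : σ (1 - (s:ℝ)) = σ 0 := by
        rw [hσ0]
        exact hha.symm.trans hFE'
      have : (1 - (s:ℝ)) = 0 := hσinj ⟨by linarith, by linarith⟩ ⟨le_rfl, le_of_lt hε0⟩ hx0
      linarith
  -- main argument
  intro x hx
  by_cases h1 : ((x : OmegaLoop M x₀).1 : C(unitInterval, M)) half ≠ x₀
  · -- Case 1: x(1/2) ≠ x₀, use the open set {y : y(1/2) ≠ x₀}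
    refine mem_interior.mpr ⟨{y : Set.range f | ((y : OmegaLoop M x₀).1 :
        C(unitInterval, M)) half ≠ x₀}, ?_, ?_, h1⟩
    · intro y hy
      exact Or.inl hy
    · exact isOpen_compl_singleton.preimage (hev half)
  · push_neg at h1
    by_cases h2 : ∀ t : unitInterval, (t:ℝ) ≤ 1/2 →
        ((x : OmegaLoop M x₀).1 : C(unitInterval, M)) t ≠ σ ε
    · -- Case 2: x avoids σ ε on the first half
      refine mem_interior.mpr ⟨{y : Set.range f |
          MapsTo ((y : OmegaLoop M x₀).1 : C(unitInterval, M))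
            {t : unitInterval | (t:ℝ) ≤ 1/2} {σ ε}ᶜ}, ?_, ?_, ?_⟩
      · rintro y hy
        obtain ⟨⟨s, γ⟩, hrep⟩ := y.2
        have hrep' : r (s, γ.1) = (y : OmegaLoop M x₀) := hrep
        have hsε : (s:ℝ) ≤ ε := by
          by_contra hc
          push_neg at hc
          obtain ⟨t, ht, hval⟩ := hhit1 s γ (le_of_lt hc)
          exact hy ht (by rw [← hrep'] at *; exact hval)
        have hb := hBlow s γ hsε
        rw [hrep'] at hb
        exact hb
      · have : IsOpen {g : C(unitInterval, M) |
            MapsTo g {t : unitInterval | (t:ℝ) ≤ 1/2} {σ ε}ᶜ} := by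
          apply ContinuousMap.isOpen_setOf_mapsTo
          · exact (isClosed_le (by fun_prop) continuous_const).isCompact
          · exact isOpen_compl_singleton
        exact this.preimage (continuous_subtype_val.comp continuous_subtype_val)
      · intro t ht
        exact h2 t ht
    · by_cases h3 : ∀ t : unitInterval, 1/2 ≤ (t:ℝ) →
          ((x : OmegaLoop M x₀).1 : C(unitInterval, M)) t ≠ σ ε
      · -- Case 3: x avoids σ ε on the second half
        refine mem_interior.mpr ⟨{y : Set.range f |
            MapsTo ((y : OmegaLoop M x₀).1 : C(unitInterval, M))
              {t : unitInterval | 1/2 ≤ (t:ℝ)} {σ ε}ᶜ}, ?_, ?_, ?_⟩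
        · rintro y hy
          obtain ⟨⟨s, γ⟩, hrep⟩ := y.2
          have hrep' : r (s, γ.1) = (y : OmegaLoop M x₀) := hrep
          have hsε : 1 - ε ≤ (s:ℝ) := by
            by_contra hc
            push_neg at hc
            obtain ⟨t, ht, hval⟩ := hhit2 s γ (le_of_lt hc)
            exact hy ht (by rw [← hrep'] at *; exact hval)
          have hb := hBhigh s γ hsε
          rw [hrep'] at hb
          exact hb
        · have : IsOpen {g : C(unitInterval, M) |
              MapsTo g {t : unitInterval | 1/2 ≤ (t:ℝ)} {σ ε}ᶜ} := by
            apply ContinuousMap.isOpen_setOf_mapsTo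
            · exact (isClosed_le continuous_const (by fun_prop)).isCompact
            · exact isOpen_compl_singleton
          exact this.preimage (continuous_subtype_val.comp continuous_subtype_val)
        · intro t ht
          exact h3 t ht
      · -- Case 4: impossible for a point of the closure of A
        exfalso
        push_neg at h2 h3
        obtain ⟨t₁, ht₁, hxt₁⟩ := h2
        obtain ⟨t₂, ht₂, hxt₂⟩ := h3
        -- separating compact sets
        have hK0 : IsCompact (σ '' Icc (ε/2) ε) :=
          (isCompact_Icc).image_of_continuousOn
            (hσcont.mono (Icc_subset_Icc (by linarith) le_rfl))
        have hK1 : IsCompact (σ '' Icc 0 (ε/2)) :=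
          (isCompact_Icc).image_of_continuousOn
            (hσcont.mono (Icc_subset_Icc le_rfl (by linarith)))
        set O : Set (Set.range f) := {y : Set.range f |
          ((y : OmegaLoop M x₀).1 : C(unitInterval, M)) t₁ ∉ σ '' Icc 0 (ε/2) ∧
          ((y : OmegaLoop M x₀).1 : C(unitInterval, M)) t₂ ∉ σ '' Icc 0 (ε/2) ∧
          ((y : OmegaLoop M x₀).1 : C(unitInterval, M)) half ∉ σ '' Icc (ε/2) ε} with hO
        have hOopen : IsOpen O := by
          refine IsOpen.inter (hK1.isClosed.isOpen_compl.preimage (hev t₁))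
            (IsOpen.inter (hK1.isClosed.isOpen_compl.preimage (hev t₂))
              (hK0.isClosed.isOpen_compl.preimage (hev half)))
        have hxO : x ∈ O := by
          refine ⟨?_, ?_, ?_⟩
          · rw [hxt₁]
            rintro ⟨u, hu, huv⟩
            have hu' : u = ε := hσinj ⟨hu.1, by linarith [hu.2]⟩ ⟨le_of_lt hε0, le_rfl⟩ huv
            linarith [hu.2]
          · rw [hxt₂]
            rintro ⟨u, hu, huv⟩
            have hu' : u = ε := hσinj ⟨hu.1, by linarith [hu.2]⟩ ⟨le_of_lt hε0, le_rfl⟩ huv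
            linarith [hu.2]
          · rw [h1]
            rintro ⟨u, hu, huv⟩
            have h0 : σ u = σ 0 := by rw [huv, hσ0]
            have : u = 0 := hσinj ⟨by linarith [hu.1], hu.2⟩ ⟨le_rfl, le_of_lt hε0⟩ h0
            linarith [hu.1]
        obtain ⟨y, hyO, hyA⟩ := mem_closure_iff.mp hx O hOopen hxO
        obtain ⟨⟨s, γ⟩, hsA, hrep⟩ := hyA
        have hrep' : r (s, γ.1) = (y : OmegaLoop M x₀) := hrep
        obtain ⟨hy1, hy2, hyh⟩ := hyO
        rcases hsA with hsA | hsA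
        · -- s ≤ ε : contradiction on the first half
          have hv1 : ((y : OmegaLoop M x₀).1 : C(unitInterval, M)) t₁
              = σ (2*(s:ℝ)*(t₁:ℝ)) := by
            rw [← hrep', hval1 s γ.1 t₁ ht₁]
            refine (γ.2 ⟨2*(s:ℝ)*(t₁:ℝ), hmem1 s t₁ ht₁⟩).1 ?_
            show 2*(s:ℝ)*(t₁:ℝ) ≤ ε
            nlinarith [mul_nonneg s.2.1 (by linarith : (0:ℝ) ≤ 1 - 2*(t₁:ℝ))]
          have hvh : ((y : OmegaLoop M x₀).1 : C(unitInterval, M)) half = σ (s:ℝ) := by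
            rw [← hrep', hvalhalf s γ.1]
            exact (γ.2 s).1 hsA
          have hs2 : (s:ℝ) < ε/2 := by
            by_contra hc
            push_neg at hc
            exact hyh ⟨s, ⟨hc, hsA⟩, hvh.symm⟩
          have h12 : ε/2 < 2*(s:ℝ)*(t₁:ℝ) := by
            by_contra hc
            push_neg at hc
            refine hy1 ⟨2*(s:ℝ)*(t₁:ℝ), ⟨?_, hc⟩, hv1.symm⟩
            have := s.2.1; have := t₁.2.1; positivity
          nlinarith [t₁.2.1, s.2.1]
        · -- 1-ε ≤ s : contradiction on the second half
          have hv2 : ((y : OmegaLoop M x₀).1 : C(unitInterval, M)) t₂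
              = σ (1 - (2*(1-(s:ℝ))*(t₂:ℝ) - 1 + 2*(s:ℝ))) := by
            rw [← hrep', hval2 s γ.1 t₂ ht₂]
            refine (γ.2 ⟨_, hmem2 s t₂ ht₂⟩).2 ?_
            show 1 - ε ≤ 2*(1-(s:ℝ))*(t₂:ℝ) - 1 + 2*(s:ℝ)
            nlinarith [mul_nonneg (by linarith [s.2.2] : (0:ℝ) ≤ 1 - s)
              (by linarith : (0:ℝ) ≤ 2*(t₂:ℝ) - 1)]
          have hvh : ((y : OmegaLoop M x₀).1 : C(unitInterval, M)) half
              = σ (1 - (s:ℝ)) := by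
            rw [← hrep', hvalhalf s γ.1]
            exact (γ.2 s).2 hsA
          have hs2 : 1 - (s:ℝ) < ε/2 := by
            by_contra hc
            push_neg at hc
            exact hyh ⟨1 - s, ⟨hc, by linarith⟩, hvh.symm⟩
          have husl : (s:ℝ) ≤ 2*(1-(s:ℝ))*(t₂:ℝ) - 1 + 2*(s:ℝ) := by
            nlinarith [mul_nonneg (by linarith [s.2.2] : (0:ℝ) ≤ 1 - s)
              (by linarith : (0:ℝ) ≤ 2*(t₂:ℝ) - 1)]
          have h12 : ε/2 < 1 - (2*(1-(s:ℝ))*(t₂:ℝ) - 1 + 2*(s:ℝ)) := by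
            by_contra hc
            push_neg at hc
            refine hy2 ⟨1 - (2*(1-(s:ℝ))*(t₂:ℝ) - 1 + 2*(s:ℝ)), ⟨?_, hc⟩, hv2.symm⟩
            linarith [(hmem2 s t₂ ht₂).2]
          linarith
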